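/- arXiv:math/0510402 — 3 statements merged into one kernel-verified Lean document; each statement's English description precedes it below -/
import Mathlib

section
/- Define J^{l,m}(a,b) for positive real tuples a = (a_1,…,a_l), b = (b_1,…,b_m) by J^{l,m} = ∫_ℝ (∏ a_i ∏ b_j)/(∏(i k + a_i) ∏(b_j - i k)) dk, a function symmetric in each set of variables, satisfying J^{s,0} = J^{0,s} = 0 for s > 1, J^{1,1}(a_1,b_1) = 2π a_1 b_1/(a_1+b_1), and the recursion J^{l,m} = (a_l/(a_l+b_m))J^{l-1,m} + (b_m/(a_l+b_m))J^{l,m-1}. Suppose A, B > 0, all a_i > A, and there exist k indices j_1,…,j_k with b_{j_s} < B for each s. Then (1/(2π)) J^{l,m} ≤ B^k (1 + 1/A)^{l+m}. -/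
/-!
The recursion writes `J^{l,m}` as a convex combination of `J^{l-1,m}` and `J^{l,m-1}`, so a bound
propagates by induction on `l + m`, and by symmetry any `b_j` may play the role of `b_m`.
If some `b_j` is not among the small entries, peel it off: both branches still carry all `k`
small entries. If every `b_j` is small, the branch `J^{l,m-1}` loses one small entry, but its
weight `b_m / (a_l + b_m)` is at most `B / A`, and `B^k + (B / A) B^{k-1} = B^k (1 + 1 / A)`.
-/

open Finset Real

def JSymmetric (J : ∀ l m : ℕ, (Fin l → ℝ) → (Fin m → ℝ) → ℝ) : Prop :=
  ∀ (l m : ℕ) (a : Fin l → ℝ) (b : Fin m → ℝ), (∀ i, 0 < a i) → (∀ j, 0 < b j) →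
    ∀ (σ : Equiv.Perm (Fin l)) (τ : Equiv.Perm (Fin m)), J l m (a ∘ σ) (b ∘ τ) = J l m a b

def JVanishes (J : ∀ l m : ℕ, (Fin l → ℝ) → (Fin m → ℝ) → ℝ) : Prop :=
  ∀ (s : ℕ), 1 < s → ∀ (a : Fin s → ℝ) (b : Fin 0 → ℝ),
    (∀ i, 0 < a i) → J s 0 a b = 0 ∧ J 0 s b a = 0

def JBaseValue (J : ∀ l m : ℕ, (Fin l → ℝ) → (Fin m → ℝ) → ℝ) : Prop :=
  ∀ (a b : Fin 1 → ℝ), 0 < a 0 → 0 < b 0 → J 1 1 a b = 2 * π * (a 0 * b 0 / (a 0 + b 0))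

def JRecursion (J : ∀ l m : ℕ, (Fin l → ℝ) → (Fin m → ℝ) → ℝ) : Prop :=
  ∀ (l m : ℕ), 1 ≤ l + m → ∀ (a : Fin (l + 1) → ℝ) (b : Fin (m + 1) → ℝ),
    (∀ i, 0 < a i) → (∀ j, 0 < b j) →
    J (l + 1) (m + 1) a b
      = (a (Fin.last l) / (a (Fin.last l) + b (Fin.last m))) * J l (m + 1) (a ∘ Fin.castSucc) b
        + (b (Fin.last m) / (a (Fin.last l) + b (Fin.last m))) * J (l + 1) m a (b ∘ Fin.castSucc)

theorem weight_mul_add_weight_mul_le {x y u v C : ℝ} (hx : 0 < x) (hy : 0 < y)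
    (hu : u ≤ C) (hv : v ≤ C) : x / (x + y) * u + y / (x + y) * v ≤ C :=
  calc x / (x + y) * u + y / (x + y) * v ≤ x / (x + y) * C + y / (x + y) * C := by
        gcongr
    _ = C := by field_simp

theorem weight_mul_add_weight_mul_le_mul {A B x y u v D : ℝ} (hA : 0 < A) (hx : A < x)
    (hy : 0 < y) (hyB : y ≤ B) (hD : 0 ≤ D) (hu : u ≤ B * D) (hv : v ≤ D) :
    x / (x + y) * u + y / (x + y) * v ≤ B * D * (1 + 1 / A) := by
  have hx0 : 0 < x := hA.trans hx
  have hxy : 0 < x + y := by linarith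
  have hwx : x / (x + y) ≤ 1 := div_le_one_of_le₀ (by linarith) hxy.le
  have hwy : y / (x + y) ≤ B / A := div_le_div₀ (by linarith) hyB hA (by linarith)
  have hB : 0 ≤ B := by linarith
  have hxu : x / (x + y) * u ≤ B * D :=
    (mul_le_mul_of_nonneg_left hu (div_pos hx0 hxy).le).trans
      (mul_le_of_le_one_left (mul_nonneg hB hD) hwx)
  have hyv : y / (x + y) * v ≤ B / A * D :=
    (mul_le_mul_of_nonneg_left hv (div_pos hy hxy).le).trans (mul_le_mul_of_nonneg_right hwy hD)
  calc x / (x + y) * u + y / (x + y) * v ≤ B * D + B / A * D := add_le_add hxu hyv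
    _ = B * D * (1 + 1 / A) := by ring

section

variable {J : ∀ l m : ℕ, (Fin l → ℝ) → (Fin m → ℝ) → ℝ}

theorem JSymmetric.apply_comp_perm (hsym : JSymmetric J) {l m : ℕ} {a : Fin l → ℝ}
    {b : Fin m → ℝ} (ha : ∀ i, 0 < a i) (hb : ∀ j, 0 < b j) (τ : Equiv.Perm (Fin m)) :
    J l m a (b ∘ τ) = J l m a b := by
  simpa using hsym l m a b ha hb 1 τ

theorem JRecursion.eq_succAbove (hrec : JRecursion J) (hsym : JSymmetric J) {l m : ℕ}
    (hlm : 1 ≤ l + m) {a : Fin (l + 1) → ℝ} {b : Fin (m + 1) → ℝ} (ha : ∀ i, 0 < a i)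
    (hb : ∀ j, 0 < b j) (j : Fin (m + 1)) :
    J (l + 1) (m + 1) a b
      = a (Fin.last l) / (a (Fin.last l) + b j) * J l (m + 1) (a ∘ Fin.castSucc) b
        + b j / (a (Fin.last l) + b j) * J (l + 1) m a (b ∘ j.succAbove) := by
  let τ : Equiv.Perm (Fin (m + 1)) := (finSuccEquiv' (Fin.last m)).trans (finSuccEquiv' j).symm
  have hτ_last : τ (Fin.last m) = j := by simp [τ]
  have hτ_castSucc : τ ∘ Fin.castSucc = j.succAbove := by
    funext i
    change (finSuccEquiv' j).symm (finSuccEquiv' (Fin.last m) (Fin.castSucc i)) = _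
    rw [← Fin.succAbove_last_apply, finSuccEquiv'_succAbove, finSuccEquiv'_symm_some]
  rw [← hsym.apply_comp_perm ha hb τ, hrec l m hlm a (b ∘ τ) ha (fun _ => hb _),
    hsym.apply_comp_perm (a := a ∘ Fin.castSucc) (fun i => ha _) hb τ]
  simp only [Function.comp_apply, hτ_last, Function.comp_assoc, hτ_castSucc]

theorem JBaseValue.le_two_pi_mul (hbase : JBaseValue J) {a b : Fin 1 → ℝ} (ha : 0 < a 0)
    (hb : 0 < b 0) :
    J 1 1 a b ≤ 2 * π * b 0 := by
  rw [hbase a b ha hb]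
  gcongr
  rw [div_le_iff₀ (by positivity)]
  nlinarith

theorem JBaseValue.le_two_pi_mul_pow_card (hbase : JBaseValue J) {A B : ℝ} (hA : 0 < A)
    (hB : 0 < B) {a b : Fin 1 → ℝ} {S : Finset (Fin 1)} (hS : S.Nonempty) (ha : ∀ i, A < a i)
    (hb : ∀ j, 0 < b j) (hSb : ∀ j ∈ S, b j < B) :
    J 1 1 a b ≤ 2 * π * (B ^ #S * (1 + 1 / A) ^ (1 + 1)) := by
  have hS1 : #S = 1 := le_antisymm (card_le_univ S) hS.card_pos
  obtain ⟨j, hj⟩ := hS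
  have hc : 1 ≤ (1 + 1 / A) ^ (1 + 1) := one_le_pow₀ (le_add_of_nonneg_right (by positivity))
  calc J 1 1 a b ≤ 2 * π * b 0 := hbase.le_two_pi_mul (hA.trans (ha 0)) (hb 0)
    _ ≤ 2 * π * (B ^ #S * (1 + 1 / A) ^ (1 + 1)) := by
      rw [hS1, pow_one, ← Fin.fin_one_eq_zero j]
      gcongr
      exact (hSb j hj).le.trans (le_mul_of_one_le_right hB.le hc)

theorem card_preimage_succAbove {m : ℕ} {S : Finset (Fin (m + 1))} {j : Fin (m + 1)}
    (hj : j ∉ S) : #(S.preimage j.succAbove Fin.succAbove_right_injective.injOn) = #S := by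
  classical
  rw [card_preimage, filter_true_of_mem]
  intro i hi
  exact Fin.exists_succAbove_eq (ne_of_mem_of_not_mem hi hj)

theorem J_le_two_pi_mul_pow_card (hsym : JSymmetric J) (hzero : JVanishes J)
    (hbase : JBaseValue J) (hrec : JRecursion J) {A B : ℝ} (hA : 0 < A) (hB : 0 < B) :
    ∀ {l m : ℕ}, 2 ≤ l + m →
      ∀ (a : Fin l → ℝ) (b : Fin m → ℝ) (S : Finset (Fin m)),
      S.Nonempty → (∀ i, A < a i) → (∀ j, 0 < b j) → (∀ j ∈ S, b j < B) →
      J l m a b ≤ 2 * π * (B ^ #S * (1 + 1 / A) ^ (l + m))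
  | 0, m, hlm, a, b, S, _, _, hb, _ => by
    rw [(hzero m (by omega) b a hb).2]
    positivity
  | _ + 1, 0, _, _, _, S, hS, _, _, _ => by
    obtain ⟨j, -⟩ := hS
    exact j.elim0
  | l + 1, m + 1, hlm, a, b, S, hS, ha, hb, hSb => by
    have ha0 : ∀ i, 0 < a i := fun i => hA.trans (ha i)
    obtain ⟨rfl, rfl⟩ | hlm1 : (l = 0 ∧ m = 0) ∨ 1 ≤ l + m := by omega
    · exact hbase.le_two_pi_mul_pow_card hA hB hS ha hb hSb
    have hX : J l (m + 1) (a ∘ Fin.castSucc) b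
        ≤ 2 * π * (B ^ #S * (1 + 1 / A) ^ (l + (m + 1))) := by
      cases l with
      | zero =>
        rw [(hzero (m + 1) (by omega) b _ hb).2]
        positivity
      | succ l =>
        exact J_le_two_pi_mul_pow_card hsym hzero hbase hrec hA hB (by omega) _ b S hS
          (fun i => ha _) hb hSb
    by_cases hout : ∃ j, j ∉ S
    · obtain ⟨j, hj⟩ := hout
      let T := S.preimage j.succAbove Fin.succAbove_right_injective.injOn
      obtain ⟨s, hs⟩ := hS
      obtain ⟨i, rfl⟩ := Fin.exists_succAbove_eq (ne_of_mem_of_not_mem hs hj)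
      have hT : T.Nonempty := ⟨i, mem_preimage.mpr hs⟩
      have hY : J (l + 1) m a (b ∘ j.succAbove)
          ≤ 2 * π * (B ^ #S * (1 + 1 / A) ^ (l + 1 + m)) := by
        rw [← card_preimage_succAbove hj]
        exact J_le_two_pi_mul_pow_card hsym hzero hbase hrec hA hB (by have := i.pos; omega) a _ T
          hT ha (fun _ => hb _) (fun i hi => hSb _ (mem_preimage.mp hi))
      rw [hrec.eq_succAbove hsym hlm1 ha0 hb j]
      calc _ ≤ 2 * π * (B ^ #S * (1 + 1 / A) ^ (l + m + 1)) :=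
            weight_mul_add_weight_mul_le (ha0 _) (hb j) (hX.trans_eq (by ring))
              (hY.trans_eq (by ring))
        _ ≤ 2 * π * (B ^ #S * (1 + 1 / A) ^ (l + 1 + (m + 1))) := by
          gcongr _ * (_ * ?_)
          exact pow_le_pow_right₀ (le_add_of_nonneg_right (by positivity)) (by omega)
    · obtain rfl : S = univ := eq_univ_of_forall (by simpa using hout)
      have hY : J (l + 1) m a (b ∘ Fin.castSucc)
          ≤ 2 * π * (B ^ m * (1 + 1 / A) ^ (l + 1 + m)) := by
        cases m with
        | zero =>
          rw [(hzero (l + 1) (by omega) a _ ha0).1]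
          positivity
        | succ m =>
          simpa only [card_univ, Fintype.card_fin] using
            J_le_two_pi_mul_pow_card hsym hzero hbase hrec hA hB (by omega) a (b ∘ Fin.castSucc)
              univ univ_nonempty ha (fun _ => hb _) (fun j _ => hSb _ (mem_univ (Fin.castSucc j)))
      rw [hrec l m hlm1 a b ha0 hb]
      calc _ ≤ B * (2 * π * (B ^ m * (1 + 1 / A) ^ (l + m + 1))) * (1 + 1 / A) :=
            weight_mul_add_weight_mul_le_mul hA (ha _) (hb _) (hSb _ (mem_univ _)).le
              (by positivity) (hX.trans_eq (by rw [card_univ, Fintype.card_fin]; ring))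
              (hY.trans_eq (by ring))
        _ = 2 * π * (B ^ #(univ : Finset (Fin (m + 1))) * (1 + 1 / A) ^ (l + 1 + (m + 1))) := by
          rw [card_univ, Fintype.card_fin]
          ring
termination_by l m => l + m

end

/-- Abstract estimate for `J^{l,m}`: if `J` is symmetric in each set of variables,
vanishes for `J^{s,0}` and `J^{0,s}` with `s > 1`, has base value
`J^{1,1}(a₁,b₁) = 2π a₁b₁/(a₁+b₁)`, and satisfies the recursion
`J^{l,m} = (a_l/(a_l+b_m))J^{l-1,m} + (b_m/(a_l+b_m))J^{l,m-1}`, then whenever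
all `a_i > A` and `k` of the `b_j` are `< B`, one has
`(1/(2π)) J^{l,m} ≤ B^k (1+1/A)^{l+m}`. -/
theorem stmt_3
    (J : ∀ l m : ℕ, (Fin l → ℝ) → (Fin m → ℝ) → ℝ)
    (hsym : ∀ (l m : ℕ) (a : Fin l → ℝ) (b : Fin m → ℝ),
      (∀ i, 0 < a i) → (∀ j, 0 < b j) →
      ∀ (σ : Equiv.Perm (Fin l)) (τ : Equiv.Perm (Fin m)),
        J l m (a ∘ σ) (b ∘ τ) = J l m a b)
    (hzero : ∀ (s : ℕ), 1 < s → ∀ (a : Fin s → ℝ) (b : Fin 0 → ℝ),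
      (∀ i, 0 < a i) → J s 0 a b = 0 ∧ J 0 s b a = 0)
    (hbase : ∀ (a b : Fin 1 → ℝ), 0 < a 0 → 0 < b 0 →
      J 1 1 a b = 2 * Real.pi * (a 0 * b 0 / (a 0 + b 0)))
    (hrec : ∀ (l m : ℕ), 1 ≤ l + m →
      ∀ (a : Fin (l + 1) → ℝ) (b : Fin (m + 1) → ℝ),
      (∀ i, 0 < a i) → (∀ j, 0 < b j) →
      J (l + 1) (m + 1) a b
        = (a (Fin.last l) / (a (Fin.last l) + b (Fin.last m)))
            * J l (m + 1) (a ∘ Fin.castSucc) b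
          + (b (Fin.last m) / (a (Fin.last l) + b (Fin.last m)))
            * J (l + 1) m a (b ∘ Fin.castSucc))
    (l m k : ℕ) (hl : 1 ≤ l) (hm : 1 ≤ m) (hk : 1 ≤ k)
    (A B : ℝ) (hA : 0 < A) (hB : 0 < B)
    (a : Fin l → ℝ) (b : Fin m → ℝ)
    (ha : ∀ i, A < a i) (hb : ∀ j, 0 < b j)
    (S : Finset (Fin m)) (hS : S.card = k) (hSb : ∀ j ∈ S, b j < B) :
    1 / (2 * Real.pi) * J l m a b ≤ B ^ k * (1 + 1 / A) ^ (l + m) := by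
  have hJ := J_le_two_pi_mul_pow_card hsym hzero hbase hrec hA hB (by omega) a b S
    (card_pos.mp (hS ▸ hk)) ha hb hSb
  rw [hS] at hJ
  rw [one_div_mul_eq_div, div_le_iff₀' (by positivity)]
  exact hJ
end

section
/- Let n ≥ 1, 1 ≤ k ≤ n, and 0 < s ≤ t, and let Δ_t^n = {y ∈ [0,∞)^n : ∑_{i=1}^n y_i ≤ t}. Then Vol{y ∈ Δ_t^n : ∑_{i=1}^k y_i ≥ s} = (1/n!) ∑_{j=1}^{k} C(n, k−j) (t − s)^{n−k+j} s^{k−j}. -/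
open MeasureTheory
open scoped Nat

open scoped ENNReal

noncomputable section

def Sset (n k : ℕ) (s t : ℝ) : Set (Fin n → ℝ) :=
  {y : Fin n → ℝ | (∀ i, 0 ≤ y i) ∧ ∑ i, y i ≤ t ∧
    s ≤ ∑ i ∈ Finset.univ.filter (fun i : Fin n => (i : ℕ) < k), y i}

lemma measurableSet_Sset (n k : ℕ) (s t : ℝ) : MeasurableSet (Sset n k s t) := by
  unfold Sset
  simp_rw [Set.setOf_and, Set.setOf_forall]
  refine MeasurableSet.inter (MeasurableSet.iInter fun i =>
      measurableSet_le measurable_const (measurable_pi_apply i))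
    (MeasurableSet.inter
      (measurableSet_le (Finset.measurable_sum _ fun i _ => measurable_pi_apply i)
        measurable_const)
      (measurableSet_le measurable_const
        (Finset.measurable_sum _ fun i _ => measurable_pi_apply i)))

lemma Sset_empty_neg {n k : ℕ} {s t : ℝ} (ht : t < 0) : Sset n k s t = ∅ := by
  ext y
  simp only [Sset, Set.mem_setOf_eq, Set.mem_empty_iff_false, iff_false, not_and]
  intro h1 h2
  exact absurd (le_trans (Finset.sum_nonneg fun i _ => h1 i) h2) (not_le.2 ht)

lemma Sset_empty_lt {n k : ℕ} {s t : ℝ} (hts : t < s) : Sset n k s t = ∅ := by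
  ext y
  simp only [Sset, Set.mem_setOf_eq, Set.mem_empty_iff_false, iff_false, not_and]
  intro h1 h2 h3
  have : ∑ i ∈ Finset.univ.filter (fun i : Fin n => (i : ℕ) < k), y i ≤ ∑ i, y i :=
    Finset.sum_le_sum_of_subset_of_nonneg (Finset.filter_subset _ _) fun i _ _ => h1 i
  linarith

lemma Sset_slice {n k : ℕ} (hkn : k ≤ n) (s t : ℝ) :
    volume (Sset (n + 1) k s t) = ∫⁻ u in Set.Ici (0 : ℝ), volume (Sset n k s (t - u)) := by
  have hmp := (volume_preserving_piFinSuccAbove (fun _ : Fin (n + 1) => ℝ) (Fin.last n)).symm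
  rw [← hmp.measure_preimage (measurableSet_Sset (n+1) k s t).nullMeasurableSet]
  have hpre : (MeasurableEquiv.piFinSuccAbove (fun _ : Fin (n + 1) => ℝ) (Fin.last n)).symm ⁻¹'
      (Sset (n + 1) k s t) =
      {p : ℝ × (Fin n → ℝ) | 0 ≤ p.1 ∧ p.2 ∈ Sset n k s (t - p.1)} := by
    ext ⟨u, v⟩
    simp only [Set.mem_preimage, MeasurableEquiv.piFinSuccAbove_symm_apply,
      Fin.insertNthEquiv, Equiv.coe_fn_mk, Sset, Set.mem_setOf_eq, Fin.insertNth_last']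
    have h2 : ∑ i, Fin.snoc v u i = ∑ j, v j + u := by
      rw [Fin.sum_univ_castSucc]
      simp [Fin.snoc_castSucc, Fin.snoc_last]
    have h3 : ∑ i ∈ Finset.univ.filter (fun i : Fin (n+1) => (i : ℕ) < k), Fin.snoc v u i
        = ∑ i ∈ Finset.univ.filter (fun i : Fin n => (i : ℕ) < k), v i := by
      rw [Finset.sum_filter, Finset.sum_filter, Fin.sum_univ_castSucc]
      have hn : ¬ ((Fin.last n : Fin (n+1)) : ℕ) < k := by
        simp only [Fin.val_last]; omega
      rw [if_neg hn]
      simp [Fin.snoc_castSucc, Fin.snoc_last]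
    have h1 : (∀ i : Fin (n+1), 0 ≤ (Fin.snoc v u : Fin (n+1) → ℝ) i) ↔ ((∀ j, 0 ≤ v j) ∧ 0 ≤ u) := by
      constructor
      · intro h
        refine ⟨fun j => ?_, ?_⟩
        · have := h (Fin.castSucc j); rwa [Fin.snoc_castSucc] at this
        · have := h (Fin.last n); rwa [Fin.snoc_last] at this
      · rintro ⟨hv, hu⟩ i
        refine Fin.lastCases ?_ (fun j => ?_) i
        · rwa [Fin.snoc_last]
        · rw [Fin.snoc_castSucc]; exact hv j
    rw [h1, h2, h3]
    constructor
    · rintro ⟨⟨hv, hu⟩, hsum, hfil⟩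
      exact ⟨hu, hv, by linarith, hfil⟩
    · rintro ⟨hu, hv, hsum, hfil⟩
      exact ⟨⟨hv, hu⟩, by linarith, hfil⟩
  have hB : MeasurableSet ((MeasurableEquiv.piFinSuccAbove (fun _ : Fin (n + 1) => ℝ)
      (Fin.last n)).symm ⁻¹' (Sset (n + 1) k s t)) :=
    (MeasurableEquiv.piFinSuccAbove (fun _ : Fin (n + 1) => ℝ)
      (Fin.last n)).symm.measurable (measurableSet_Sset (n+1) k s t)
  rw [hpre] at hB
  rw [hpre, Measure.volume_eq_prod, Measure.prod_apply hB]
  have hslice : ∀ u : ℝ, volume (Prod.mk u ⁻¹'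
        {p : ℝ × (Fin n → ℝ) | 0 ≤ p.1 ∧ p.2 ∈ Sset n k s (t - p.1)})
      = Set.indicator (Set.Ici (0:ℝ)) (fun u => volume (Sset n k s (t - u))) u := by
    intro u
    by_cases hu : u ∈ Set.Ici (0:ℝ)
    · rw [Set.indicator_of_mem hu]
      congr 1
      ext v
      simpa using fun _ => hu
    · rw [Set.indicator_of_notMem hu]
      have : Prod.mk u ⁻¹' {p : ℝ × (Fin n → ℝ) | 0 ≤ p.1 ∧ p.2 ∈ Sset n k s (t - p.1)} = ∅ := by
        ext v
        simp only [Set.mem_preimage, Set.mem_setOf_eq, Set.mem_empty_iff_false, iff_false]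
        exact fun h => hu h.1
      rw [this, measure_empty]
  rw [lintegral_congr hslice, lintegral_indicator measurableSet_Ici]

lemma lint_helper (c : ℝ) (hc : 0 ≤ c) (g : ℝ → ℝ≥0∞) (f : ℝ → ℝ)
    (hg : ∀ u ∈ Set.Icc 0 c, g u = ENNReal.ofReal (f u))
    (hg0 : ∀ u : ℝ, c < u → g u = 0)
    (hf : ContinuousOn f (Set.Icc 0 c)) (hf0 : ∀ u ∈ Set.Icc 0 c, 0 ≤ f u) :
    ∫⁻ u in Set.Ici (0 : ℝ), g u = ENNReal.ofReal (∫ u in (0:ℝ)..c, f u) := by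
  have hsplit : Set.Ici (0:ℝ) = Set.Icc 0 c ∪ Set.Ioi c := by
    ext x
    simp only [Set.mem_Ici, Set.mem_union, Set.mem_Icc, Set.mem_Ioi]
    constructor
    · intro hx
      rcases le_or_gt x c with h | h
      · exact Or.inl ⟨hx, h⟩
      · exact Or.inr h
    · rintro (⟨h, _⟩ | h) <;> linarith
  have hdisj : Disjoint (Set.Icc (0:ℝ) c) (Set.Ioi c) :=
    Set.disjoint_left.2 fun x hx hx' => absurd hx.2 (not_le.2 hx')
  rw [hsplit, lintegral_union measurableSet_Ioi hdisj]
  have h2 : ∫⁻ u in Set.Ioi c, g u = 0 := by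
    rw [setLIntegral_congr_fun measurableSet_Ioi
      (fun u (hu : u ∈ Set.Ioi c) => hg0 u hu)]
    simp
  have h1 : ∫⁻ u in Set.Icc 0 c, g u = ENNReal.ofReal (∫ u in Set.Icc (0:ℝ) c, f u) := by
    rw [setLIntegral_congr_fun measurableSet_Icc
      (fun u (hu : u ∈ Set.Icc 0 c) => hg u hu)]
    rw [← ofReal_integral_eq_lintegral_ofReal (hf.integrableOn_Icc)
      ((ae_restrict_iff' measurableSet_Icc).2 (ae_of_all _ hf0))]
  rw [h1, h2, add_zero, MeasureTheory.integral_Icc_eq_integral_Ioc,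
    ← intervalIntegral.integral_of_le hc]

lemma vol_W (n : ℕ) : ∀ t : ℝ, 0 ≤ t →
    volume (Sset n 0 0 t) = ENNReal.ofReal (t ^ n / n !) := by
  induction n with
  | zero =>
    intro t ht
    have huniv : Sset 0 0 0 t = Set.univ := by
      ext y
      simp [Sset, ht]
    rw [huniv, volume_pi, Measure.pi_univ]
    simp
  | succ n ih =>
    intro t ht
    rw [Sset_slice (Nat.zero_le n) 0 t,
      lint_helper t ht _ (fun u => (t - u) ^ n / n !)
        (fun u hu => ih (t - u) (by linarith [hu.2]))
        (fun u hu => by rw [Sset_empty_neg (by linarith), measure_empty])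
        (by fun_prop)
        (fun u hu => by
          have : 0 ≤ t - u := by linarith [hu.2]
          positivity)]
  -- compute the interval integral
    congr 1
    have := intervalIntegral.integral_comp_sub_left (a := (0:ℝ)) (b := t)
      (fun x => x ^ n / n !) t
    rw [this, sub_zero, sub_self]
    rw [intervalIntegral.integral_div, integral_pow]
    rw [Nat.factorial_succ]
    push_cast
    have h1 : (n ! : ℝ) ≠ 0 := by positivity
    field_simp
    simp

lemma vol_hyperplane (n : ℕ) (hn : 1 ≤ n) (s : ℝ) :
    volume {y : Fin n → ℝ | ∑ i, y i = s} = 0 := by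
  set L : (Fin n → ℝ) →ₗ[ℝ] ℝ := ∑ i, LinearMap.proj i with hL
  have hLapp : ∀ y : Fin n → ℝ, L y = ∑ i, y i := by
    intro y
    simp [hL, LinearMap.sum_apply]
  have hLne : L ≠ 0 := by
    intro h
    have h2 := hLapp (fun _ => 1)
    rw [h] at h2
    simp only [LinearMap.zero_apply, Finset.sum_const, Finset.card_univ, Fintype.card_fin,
      nsmul_eq_mul, mul_one] at h2
    have : (n : ℝ) ≠ 0 := by
      have : n ≠ 0 := by omega
      exact_mod_cast this
    exact this h2.symm
  have hker : LinearMap.ker L ≠ ⊤ := by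
    intro h
    exact hLne (LinearMap.ker_eq_top.1 h)
  -- the affine subspace
  set p : Fin n → ℝ := fun _ => s / n with hp
  have hps : ∑ i, p i = s := by
    simp [hp]
    field_simp
  set A : AffineSubspace ℝ (Fin n → ℝ) := AffineSubspace.mk' p (LinearMap.ker L) with hA
  have hAset : {y : Fin n → ℝ | ∑ i, y i = s} = (A : Set (Fin n → ℝ)) := by
    ext y
    simp only [Set.mem_setOf_eq, hA, AffineSubspace.mem_coe,
      AffineSubspace.mem_mk', LinearMap.mem_ker, hLapp, vsub_eq_sub, Pi.sub_apply,
      Finset.sum_sub_distrib, hps, sub_eq_zero]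
  have hAtop : A ≠ ⊤ := by
    intro h
    apply hker
    have h2 : A.direction = ⊤ := by rw [h]; exact AffineSubspace.direction_top ℝ _ _
    rwa [hA, AffineSubspace.direction_mk'] at h2
  rw [hAset]
  exact Measure.addHaar_affineSubspace volume A hAtop

lemma vol_base (k : ℕ) (hk : 1 ≤ k) (s t : ℝ) (hs : 0 ≤ s) (hst : s ≤ t) :
    volume (Sset k k s t) = ENNReal.ofReal ((t ^ k - s ^ k) / k !) := by
  set small : Set (Fin k → ℝ) := {y | (∀ i, 0 ≤ y i) ∧ ∑ i, y i < s} with hsm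
  have hset : Sset k k s t = Sset k 0 0 t \ small := by
    ext y
    simp only [Sset, Set.mem_setOf_eq, Set.mem_diff, hsm]
    constructor
    · rintro ⟨h1, h2, h3⟩
      have hall : ∑ i ∈ Finset.univ.filter (fun i : Fin k => (i : ℕ) < k), y i = ∑ i, y i := by
        congr 1
        exact Finset.filter_true_of_mem fun i _ => i.isLt
      rw [hall] at h3
      exact ⟨⟨h1, h2, by simp⟩, fun h => absurd h.2 (not_lt.2 h3)⟩
    · rintro ⟨⟨h1, h2, -⟩, h4⟩
      refine ⟨h1, h2, ?_⟩
      have hall : ∑ i ∈ Finset.univ.filter (fun i : Fin k => (i : ℕ) < k), y i = ∑ i, y i := by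
        congr 1
        exact Finset.filter_true_of_mem fun i _ => i.isLt
      rw [hall]
      by_contra hlt
      exact h4 ⟨h1, not_le.1 hlt⟩
  have hsmall_meas : MeasurableSet small := by
    rw [hsm]
    simp_rw [Set.setOf_and, Set.setOf_forall]
    exact MeasurableSet.inter
      (MeasurableSet.iInter fun i => measurableSet_le measurable_const (measurable_pi_apply i))
      (measurableSet_lt (Finset.measurable_sum _ fun i _ => measurable_pi_apply i)
        measurable_const)
  have hsub : small ⊆ Sset k 0 0 t := by
    rintro y ⟨h1, h2⟩
    exact ⟨h1, by linarith, by simp⟩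
  have hsmall_vol : volume small = ENNReal.ofReal (s ^ k / k !) := by
    have h1 : small = Sset k 0 0 s \ {y : Fin k → ℝ | ∑ i, y i = s} := by
      ext y
      simp only [hsm, Set.mem_setOf_eq, Set.mem_diff, Sset]
      constructor
      · rintro ⟨h1, h2⟩
        exact ⟨⟨h1, le_of_lt h2, by simp⟩, ne_of_lt h2⟩
      · rintro ⟨⟨h1, h2, -⟩, h3⟩
        exact ⟨h1, lt_of_le_of_ne h2 h3⟩
    rw [h1, measure_diff_null (vol_hyperplane k hk s), vol_W k s hs]
  rw [hset, measure_diff hsub hsmall_meas.nullMeasurableSet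
    (by rw [hsmall_vol]; exact ENNReal.ofReal_ne_top), hsmall_vol, vol_W k t (le_trans hs hst),
    ← ENNReal.ofReal_sub _ (by positivity : (0:ℝ) ≤ s ^ k / k !)]
  congr 1
  ring

lemma vol_main (m : ℕ) : ∀ (k : ℕ), 1 ≤ k → ∀ s t : ℝ, 0 < s → s ≤ t →
    volume (Sset (k + m) k s t) = ENNReal.ofReal ((1 / (k + m)!) *
      ∑ j ∈ Finset.Icc 1 k, ((k + m).choose (k - j) : ℝ) * (t - s) ^ (m + j) * s ^ (k - j)) := by
  induction m with
  | zero =>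
    intro k hk s t hs hst
    simp only [Nat.add_zero, Nat.zero_add]
    rw [vol_base k hk s t hs.le hst]
    congr 1
    have hterm : ∀ j ∈ Finset.Icc 1 k, (k.choose (k - j) : ℝ) * (t - s) ^ j * s ^ (k - j)
        = (t - s) ^ j * s ^ (k - j) * (k.choose j : ℝ) := by
      intro j hj
      have hjk : j ≤ k := (Finset.mem_Icc.1 hj).2
      rw [Nat.choose_symm hjk]
      ring
    have hr : Finset.range (k + 1) = insert 0 (Finset.Icc 1 k) := by
      ext x
      simp only [Finset.mem_range, Finset.mem_insert, Finset.mem_Icc]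
      omega
    have hpow := add_pow (t - s) s k
    rw [hr, Finset.sum_insert (by simp)] at hpow
    simp only [pow_zero, one_mul, Nat.sub_zero, Nat.choose_zero_right, Nat.cast_one, mul_one,
      sub_add_cancel] at hpow
    have hsum : ∑ j ∈ Finset.Icc 1 k, (k.choose (k - j) : ℝ) * (t - s) ^ j * s ^ (k - j)
        = t ^ k - s ^ k := by
      rw [Finset.sum_congr rfl hterm]
      linarith [hpow]
    rw [hsum]
    ring
  | succ m ih =>
    intro k hk s t hs hst
    have hc : (0:ℝ) ≤ t - s := by linarith
    have hslice : volume (Sset (k + (m + 1)) k s t)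
        = ∫⁻ u in Set.Ici (0:ℝ), volume (Sset (k + m) k s (t - u)) :=
      Sset_slice (Nat.le_add_right k m) s t
    rw [hslice, lint_helper (t - s) hc _
      (fun u => ∑ j ∈ Finset.Icc 1 k,
        ((1 / (k + m)!) * (((k + m).choose (k - j) : ℝ)) * s ^ (k - j)) * ((t - s) - u) ^ (m + j))
      (fun u hu => by
        rw [ih k hk s (t - u) hs (by linarith [hu.2])]
        congr 1
        rw [Finset.mul_sum]
        exact Finset.sum_congr rfl fun j hj => by ring)
      (fun u hu => by rw [Sset_empty_lt (by linarith), measure_empty])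
      (Continuous.continuousOn (continuous_finset_sum _ fun j _ => by fun_prop))
      (fun u hu => Finset.sum_nonneg fun j hj => mul_nonneg (by positivity)
        (pow_nonneg (by linarith [hu.2]) _))]
    congr 1
    have hint : ∀ p : ℕ, (∫ u in (0:ℝ)..(t - s), ((t - s) - u) ^ p)
        = (t - s) ^ (p + 1) / (p + 1) := by
      intro p
      rw [intervalIntegral.integral_comp_sub_left (fun x => x ^ p) (t - s), sub_zero, sub_self,
        integral_pow]
      rw [zero_pow (by omega : p + 1 ≠ 0)]
      ring
    rw [intervalIntegral.integral_finset_sum (fun j hj =>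
      (Continuous.intervalIntegrable (by fun_prop) _ _))]
    simp_rw [intervalIntegral.integral_const_mul, hint]
    rw [Finset.mul_sum]
    refine Finset.sum_congr rfl fun j hj => ?_
    obtain ⟨hj1, hjk⟩ := Finset.mem_Icc.1 hj
    have e0 : k + (m + 1) = (k + m) + 1 := by omega
    rw [e0]
    have e1 : k + m - (k - j) = m + j := by omega
    have e2 : k + m + 1 - (k - j) = m + j + 1 := by omega
    rw [Nat.cast_choose ℝ (by omega : k - j ≤ k + m),
      Nat.cast_choose ℝ (by omega : k - j ≤ k + m + 1), e1, e2,
      Nat.factorial_succ (k + m), Nat.factorial_succ (m + j)]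
    have f1 : ((k + m)! : ℝ) ≠ 0 := by positivity
    have f2 : ((k - j)! : ℝ) ≠ 0 := by positivity
    have f3 : ((m + j)! : ℝ) ≠ 0 := by positivity
    have f4 : ((m + j : ℕ) : ℝ) + 1 ≠ 0 := by positivity
    have f5 : ((k + m : ℕ) : ℝ) + 1 ≠ 0 := by positivity
    push_cast
    field_simp
    ring
end

/-- Volume of the part of the simplex `Δ_t^n` where the first `k` coordinates sum
to at least `s`:
`Vol{y ∈ Δ_t^n : ∑_{i=1}^k y_i ≥ s} = (1/n!) ∑_{j=1}^k C(n,k−j)(t−s)^{n−k+j} s^{k−j}`. -/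
theorem stmt_7 (n k : ℕ) (hk : 1 ≤ k) (hkn : k ≤ n) (s t : ℝ)
    (hs : 0 < s) (hst : s ≤ t) :
    volume {y : Fin n → ℝ | (∀ i, 0 ≤ y i) ∧ ∑ i, y i ≤ t ∧
        s ≤ ∑ i ∈ Finset.univ.filter (fun i : Fin n => (i : ℕ) < k), y i}
      = ENNReal.ofReal ((1 / n !) * ∑ j ∈ Finset.Icc 1 k,
          (n.choose (k - j) : ℝ) * (t - s) ^ (n - k + j) * s ^ (k - j)) := by
  obtain ⟨m, rfl⟩ : ∃ m, n = k + m := ⟨n - k, by omega⟩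
  have h := vol_main m k hk s t hs hst
  simp only [Nat.add_sub_cancel_left]
  exact h
end

section
/- Let n ≥ 1, k with 1 ≤ k ≤ n, and reals r_0, c, R, D with D > 1 and 0 < r_0 < c/D < c ≤ R. Let W_2 ⊂ (0,1]^n be the set of x with r_0/R ≤ ∏_{i=1}^n x_i ≤ r_0/c and ∏_{i=1}^k x_i ≤ r_0 D/c. Then Vol(W_2) ≤ (1/n!)(r_0/c) ∑_{j=1}^{k} C(n, k−j) (log(RD/c))^{n−k+j} (log(c/(D r_0)))^{k−j}. -/
open MeasureTheory
open scoped Nat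

open scoped ENNReal

lemma aux_det_pi {n : ℕ} (a : Fin n → ℝ) :
    LinearMap.det (LinearMap.pi (fun i => a i • LinearMap.proj i) :
      (Fin n → ℝ) →ₗ[ℝ] (Fin n → ℝ)) = ∏ i, a i := by
  rw [← LinearMap.det_toMatrix (Pi.basisFun ℝ (Fin n))]
  have : (LinearMap.toMatrix (Pi.basisFun ℝ (Fin n)) (Pi.basisFun ℝ (Fin n))
      (LinearMap.pi (fun i => a i • LinearMap.proj i))) = Matrix.diagonal a := by
    ext i j
    simp [LinearMap.toMatrix_apply, Matrix.diagonal, Pi.single_apply, eq_comm]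
  rw [this, Matrix.det_diagonal]

lemma aux_perm_vol {n : ℕ} (σ : Equiv.Perm (Fin n)) {s : Set (Fin n → ℝ)}
    (hs : MeasurableSet s) : volume ((fun z : Fin n → ℝ => z ∘ σ) ⁻¹' s) = volume s := by
  have h := MeasureTheory.volume_measurePreserving_piCongrLeft (fun _ : Fin n => ℝ) σ.symm
  have hc : ⇑(MeasurableEquiv.piCongrLeft (fun _ : Fin n => ℝ) σ.symm)
      = fun z : Fin n → ℝ => z ∘ σ := by
    ext z i
    simp [MeasurableEquiv.piCongrLeft, Equiv.piCongrLeft, Equiv.piCongrLeft',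
      Function.comp]
  rw [← hc]
  exact h.measure_preimage hs.nullMeasurableSet

noncomputable def psum (n : ℕ) : (Fin n → ℝ) →ₗ[ℝ] (Fin n → ℝ) :=
  LinearMap.pi (fun i => ∑ j ∈ Finset.univ.filter (fun j => j ≤ i), LinearMap.proj j)

lemma psum_apply {n : ℕ} (y : Fin n → ℝ) (i : Fin n) :
    psum n y i = ∑ j ∈ Finset.univ.filter (fun j => j ≤ i), y j := by
  simp [psum]

lemma psum_det (n : ℕ) : LinearMap.det (psum n) = 1 := by
  rw [← LinearMap.det_toMatrix (Pi.basisFun ℝ (Fin n))]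
  set M := LinearMap.toMatrix (Pi.basisFun ℝ (Fin n)) (Pi.basisFun ℝ (Fin n)) (psum n) with hM
  have hMe : ∀ i j, M i j = if j ≤ i then 1 else 0 := by
    intro i j
    simp only [hM, LinearMap.toMatrix_apply, Pi.basisFun_repr, Pi.basisFun_apply, psum_apply]
    simp [Finset.sum_ite_eq']
  have ht : M.BlockTriangular OrderDual.toDual := by
    intro i j hij
    rw [hMe]
    simp only [OrderDual.toDual_lt_toDual] at hij
    rw [if_neg (not_le.mpr hij)]
  rw [Matrix.det_of_lowerTriangular M ht]
  simp [hMe]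

lemma aux_simplex (n k : ℕ) (hk : 1 ≤ k) (hkn : k ≤ n) (A B : ℝ) (hA : 0 ≤ A) (hB : 0 ≤ B) :
    volume {y : Fin n → ℝ | (∀ i, 0 ≤ y i) ∧ (∑ i, y i) ≤ A + B ∧
        A ≤ ∑ i ∈ Finset.univ.filter (fun i : Fin n => (i : ℕ) < k), y i}
      ≤ ENNReal.ofReal (∑ j ∈ Finset.range k,
          (n.choose j : ℝ) * A ^ j * B ^ (n - j)) / n ! := by
  classical
  have hk1n : k - 1 < n := by omega
  set kidx : Fin n := ⟨k - 1, hk1n⟩ with hkidx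
  set O : Set (Fin n → ℝ) := {z | (∀ i, 0 ≤ z i ∧ z i ≤ A + B) ∧
      (∀ i j : Fin n, i ≤ j → z i ≤ z j) ∧ A ≤ z kidx} with hO
  set O' : Set (Fin n → ℝ) := {z | (∀ i, 0 ≤ z i ∧ z i ≤ A + B) ∧
      (∀ i j : Fin n, i < j → z i < z j) ∧ A ≤ z kidx} with hO'
  set U : Set (Fin n → ℝ) := {z | (∀ i, 0 ≤ z i ∧ z i ≤ A + B) ∧
      (Finset.univ.filter (fun i => z i < A)).card < k} with hU
  -- measurability
  have mbnd : MeasurableSet {z : Fin n → ℝ | ∀ i, 0 ≤ z i ∧ z i ≤ A + B} := by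
    rw [Set.setOf_forall]
    exact MeasurableSet.iInter fun i => ((measurableSet_le measurable_const
      (measurable_pi_apply i)).inter (measurableSet_le (measurable_pi_apply i) measurable_const))
  have mO' : MeasurableSet O' := by
    refine mbnd.inter (MeasurableSet.inter ?_ (measurableSet_le measurable_const
      (measurable_pi_apply kidx)))
    show MeasurableSet {z : Fin n → ℝ | ∀ i j : Fin n, i < j → z i < z j}
    rw [Set.setOf_forall]
    refine MeasurableSet.iInter fun i => ?_
    rw [Set.setOf_forall]
    refine MeasurableSet.iInter fun j => ?_
    by_cases h : i < j
    · simp only [h, true_implies]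
      exact measurableSet_lt (measurable_pi_apply i) (measurable_pi_apply j)
    · simp only [h, false_implies, Set.setOf_true]
      exact MeasurableSet.univ
  -- Step 1 : Y ⊆ psum ⁻¹' O
  have hsub1 : {y : Fin n → ℝ | (∀ i, 0 ≤ y i) ∧ (∑ i, y i) ≤ A + B ∧
      A ≤ ∑ i ∈ Finset.univ.filter (fun i : Fin n => (i : ℕ) < k), y i}
      ⊆ ⇑(psum n) ⁻¹' O := by
    rintro y ⟨h0, hsum, hpart⟩
    refine ⟨fun i => ⟨?_, ?_⟩, fun i j hij => ?_, ?_⟩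
    · rw [psum_apply]
      exact Finset.sum_nonneg fun j _ => h0 j
    · rw [psum_apply]
      refine le_trans (Finset.sum_le_sum_of_subset_of_nonneg (Finset.filter_subset _ _)
        (fun j _ _ => h0 j)) hsum
    · rw [psum_apply, psum_apply]
      refine Finset.sum_le_sum_of_subset_of_nonneg (fun x hx => ?_) (fun j _ _ => h0 j)
      simp only [Finset.mem_filter, Finset.mem_univ, true_and] at hx ⊢
      exact le_trans hx hij
    · rw [psum_apply]
      have : Finset.univ.filter (fun j => j ≤ kidx)
          = Finset.univ.filter (fun i : Fin n => (i : ℕ) < k) := by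
        ext j
        simp only [Finset.mem_filter, Finset.mem_univ, true_and, Fin.le_def, hkidx]
        omega
      rw [this]
      exact hpart
  -- Step 2 : preimage volume
  have hpre : volume (⇑(psum n) ⁻¹' O) = volume O := by
    rw [Measure.addHaar_preimage_linearMap volume (by rw [psum_det]; norm_num) O]
    simp [psum_det]
  -- Step 3 : volume O ≤ volume O'
  have hnull : ∀ i j : Fin n, i ≠ j → volume {z : Fin n → ℝ | z i = z j} = 0 := by
    intro i j hij
    have hset : {z : Fin n → ℝ | z i = z j} =
        ↑(LinearMap.ker ((LinearMap.proj i : (Fin n → ℝ) →ₗ[ℝ] ℝ) - LinearMap.proj j)) := by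
      ext z
      simp [LinearMap.mem_ker, sub_eq_zero]
    rw [hset]
    refine Measure.addHaar_submodule volume _ ?_
    intro htop
    have h1 : Pi.single i (1 : ℝ) ∈ LinearMap.ker
        ((LinearMap.proj i : (Fin n → ℝ) →ₗ[ℝ] ℝ) - LinearMap.proj j) := by
      rw [htop]; trivial
    simp [LinearMap.mem_ker, Pi.single_eq_same, Pi.single_eq_of_ne (Ne.symm hij)] at h1
  have hOO' : volume O ≤ volume O' := by
    have hsub : O ⊆ O' ∪ ⋃ (i : Fin n) (j : Fin n) (_ : i ≠ j), {z : Fin n → ℝ | z i = z j} := by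
      rintro z ⟨hb, hm, hA'⟩
      by_cases hstrict : ∀ i j : Fin n, i < j → z i < z j
      · exact Or.inl ⟨hb, hstrict, hA'⟩
      · push_neg at hstrict
        obtain ⟨i, j, hij, hle⟩ := hstrict
        refine Or.inr (Set.mem_iUnion.2 ⟨i, Set.mem_iUnion.2 ⟨j,
          Set.mem_iUnion.2 ⟨ne_of_lt hij, le_antisymm (hm i j hij.le) hle⟩⟩⟩)
    calc volume O ≤ volume O' + volume (⋃ (i : Fin n) (j : Fin n) (_ : i ≠ j),
          {z : Fin n → ℝ | z i = z j}) := le_trans (measure_mono hsub) (measure_union_le _ _)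
      _ = volume O' := by
          rw [measure_iUnion_null fun i => measure_iUnion_null fun j =>
            measure_iUnion_null fun hij => hnull i j hij, add_zero]
  -- Step 4 : n! * volume O' ≤ volume U
  set E : Equiv.Perm (Fin n) → Set (Fin n → ℝ) :=
    fun σ => (fun z : Fin n → ℝ => z ∘ σ) ⁻¹' O' with hE
  have hmeasmap : ∀ σ : Equiv.Perm (Fin n),
      Measurable (fun z : Fin n → ℝ => z ∘ σ) :=
    fun σ => measurable_pi_iff.2 fun i => measurable_pi_apply (σ i)
  have hmeasE : ∀ σ, MeasurableSet (E σ) := fun σ => mO'.preimage (hmeasmap σ)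
  have hEvol : ∀ σ, volume (E σ) = volume O' := fun σ => aux_perm_vol σ mO'
  have hEU : ∀ σ, E σ ⊆ U := by
    intro σ z hz
    obtain ⟨hb, hsm, hA'⟩ := hz
    have hmono : ∀ a b : Fin n, a ≤ b → z (σ a) ≤ z (σ b) := by
      intro a b hab
      rcases lt_or_eq_of_le hab with h | h
      · exact (hsm a b h).le
      · rw [h]
    constructor
    · intro i
      have h := hb (σ.symm i)
      simp only [Function.comp_apply, Equiv.apply_symm_apply] at h
      exact h
    · have hsub : Finset.univ.filter (fun i => z i < A)
          ⊆ (Finset.univ.filter (fun j : Fin n => (j : ℕ) < k - 1)).image σ := by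
        intro i hi
        simp only [Finset.mem_filter, Finset.mem_univ, true_and] at hi
        simp only [Finset.mem_image, Finset.mem_filter, Finset.mem_univ, true_and]
        refine ⟨σ.symm i, ?_, Equiv.apply_symm_apply σ i⟩
        by_contra hge
        have hkle : kidx ≤ σ.symm i := by
          rw [Fin.le_def]; simp only [hkidx]; omega
        have := le_trans hA' (hmono kidx (σ.symm i) hkle)
        rw [Equiv.apply_symm_apply] at this
        exact absurd hi (not_lt.mpr this)
      have hcard1 : ((Finset.univ.filter (fun j : Fin n => (j : ℕ) < k - 1)).card ≤ k - 1) := by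
        have := Finset.card_le_card_of_injOn
          (s := Finset.univ.filter (fun j : Fin n => (j : ℕ) < k - 1))
          (t := Finset.range (k - 1)) (fun j : Fin n => (j : ℕ))
          (fun j hj => by
            simp only [Finset.coe_filter, Finset.mem_filter, Finset.mem_univ, true_and, Set.mem_setOf_eq] at hj
            exact Finset.mem_range.2 hj)
          (fun a _ b _ hab => Fin.val_injective hab)
        simpa [Finset.card_range] using this
      calc (Finset.univ.filter (fun i => z i < A)).card
          ≤ ((Finset.univ.filter (fun j : Fin n => (j : ℕ) < k - 1)).image σ).card :=
            Finset.card_le_card hsub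
        _ ≤ (Finset.univ.filter (fun j : Fin n => (j : ℕ) < k - 1)).card :=
            Finset.card_image_le
        _ < k := by omega
  have hdisj : Pairwise (Function.onFun Disjoint E) := by
    intro σ τ hne
    rw [Function.onFun, Set.disjoint_left]
    intro z hzσ hzτ
    apply hne
    have h1 : StrictMono (z ∘ σ) := fun a b hab => hzσ.2.1 a b hab
    have h2 : StrictMono (z ∘ τ) := fun a b hab => hzτ.2.1 a b hab
    have hr : Set.range (z ∘ σ) = Set.range (z ∘ τ) := by
      rw [Set.range_comp, Set.range_comp, Equiv.range_eq_univ, Equiv.range_eq_univ]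
    haveI : WellFoundedLT (Fin n) := Finite.to_wellFoundedLT
    have heq := (h1.range_inj h2).1 hr
    have hzinj : Function.Injective z := by
      have : z = (z ∘ σ) ∘ σ.symm := by funext a; simp
      rw [this]
      exact h1.injective.comp σ.symm.injective
    exact Equiv.ext fun i => hzinj (congrFun heq i)
  have hstep4 : (n ! : ℝ≥0∞) * volume O' ≤ volume U := by
    calc (n ! : ℝ≥0∞) * volume O' = ∑' σ : Equiv.Perm (Fin n), volume (E σ) := by
          rw [tsum_fintype]
          simp only [hEvol]
          rw [Finset.sum_const, Finset.card_univ, Fintype.card_perm, Fintype.card_fin,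
            nsmul_eq_mul]
      _ = volume (⋃ σ, E σ) := (measure_iUnion hdisj hmeasE).symm
      _ ≤ volume U := measure_mono (Set.iUnion_subset hEU)
  -- Step 5 : volume U ≤ ofReal M
  have hbox : ∀ T : Finset (Fin n),
      volume (Set.pi Set.univ (fun i => if i ∈ T then Set.Ico (0:ℝ) A else Set.Icc A (A+B)))
        = ENNReal.ofReal (A ^ T.card * B ^ (n - T.card)) := by
    intro T
    rw [volume_pi_pi]
    simp only [apply_ite volume, Real.volume_Ico, Real.volume_Icc, sub_zero,
      add_sub_cancel_left]
    rw [Finset.prod_ite (f := fun _ => ENNReal.ofReal A) (g := fun _ => ENNReal.ofReal B),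
      Finset.prod_const, Finset.prod_const]
    have h1 : Finset.univ.filter (fun i : Fin n => i ∈ T) = T := by
      ext i; simp
    have h2 : (Finset.univ.filter (fun i : Fin n => i ∉ T)).card = n - T.card := by
      rw [Finset.filter_not, h1, Finset.card_sdiff_of_subset (Finset.subset_univ T),
        Finset.card_univ, Fintype.card_fin]
    rw [h1, h2, ← ENNReal.ofReal_pow hA, ← ENNReal.ofReal_pow hB,
      ← ENNReal.ofReal_mul (by positivity)]
  have hcover : U ⊆ ⋃ T ∈ Finset.univ.powerset.filter (fun T : Finset (Fin n) => T.card < k),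
      Set.pi Set.univ (fun i => if i ∈ T then Set.Ico (0:ℝ) A else Set.Icc A (A+B)) := by
    rintro z ⟨hb, hcard⟩
    refine Set.mem_biUnion (show (Finset.univ.filter (fun i => z i < A)) ∈
      Finset.univ.powerset.filter (fun T : Finset (Fin n) => T.card < k) by
        simp only [Finset.mem_filter, Finset.mem_powerset]
        exact ⟨Finset.subset_univ _, hcard⟩) ?_
    rw [Set.mem_univ_pi]
    intro i
    by_cases h : z i < A
    · rw [if_pos (by simp [h])]
      exact ⟨(hb i).1, h⟩
    · rw [if_neg (by simp [h])]
      exact ⟨not_lt.1 h, (hb i).2⟩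
  have hS : Finset.univ.powerset.filter (fun T : Finset (Fin n) => T.card < k)
      = (Finset.range k).biUnion (fun j => Finset.powersetCard j (Finset.univ : Finset (Fin n))) := by
    ext T
    simp only [Finset.mem_filter, Finset.mem_powerset, Finset.mem_biUnion, Finset.mem_range,
      Finset.mem_powersetCard_univ]
    constructor
    · rintro ⟨-, h⟩; exact ⟨T.card, h, rfl⟩
    · rintro ⟨j, hj, rfl⟩; exact ⟨Finset.subset_univ _, hj⟩
  have hstep5 : volume U ≤ ENNReal.ofReal (∑ j ∈ Finset.range k,
      (n.choose j : ℝ) * A ^ j * B ^ (n - j)) := by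
    calc volume U ≤ ∑ T ∈ Finset.univ.powerset.filter (fun T : Finset (Fin n) => T.card < k),
          ENNReal.ofReal (A ^ T.card * B ^ (n - T.card)) := by
          refine le_trans (measure_mono hcover) ?_
          refine le_trans (measure_biUnion_finset_le _ _) ?_
          exact le_of_eq (Finset.sum_congr rfl fun T _ => hbox T)
      _ = ∑ j ∈ Finset.range k, ∑ T ∈ Finset.powersetCard j (Finset.univ : Finset (Fin n)),
          ENNReal.ofReal (A ^ T.card * B ^ (n - T.card)) := by
          rw [hS, Finset.sum_biUnion]
          intro a ha b hb hab
          simp only [Function.onFun]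
          rw [Finset.disjoint_left]
          intro T hTa hTb
          rw [Finset.mem_powersetCard_univ] at hTa hTb
          exact hab (hTa ▸ hTb ▸ rfl)
      _ = ∑ j ∈ Finset.range k, (n.choose j : ℝ≥0∞) * ENNReal.ofReal (A ^ j * B ^ (n - j)) := by
          refine Finset.sum_congr rfl fun j hj => ?_
          rw [Finset.sum_congr rfl (fun T hT => by
            rw [(Finset.mem_powersetCard_univ.1 hT : T.card = j)]),
            Finset.sum_const, Finset.card_powersetCard, Finset.card_univ, Fintype.card_fin,
            nsmul_eq_mul]
      _ = ENNReal.ofReal (∑ j ∈ Finset.range k, (n.choose j : ℝ) * A ^ j * B ^ (n - j)) := by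
          rw [ENNReal.ofReal_sum_of_nonneg (fun j _ => by positivity)]
          refine Finset.sum_congr rfl fun j _ => ?_
          rw [← ENNReal.ofReal_natCast (n.choose j), ← ENNReal.ofReal_mul (by positivity)]
          congr 1
          ring
  -- conclusion
  have hO'le : volume O' ≤ ENNReal.ofReal (∑ j ∈ Finset.range k,
      (n.choose j : ℝ) * A ^ j * B ^ (n - j)) / n ! := by
    rw [ENNReal.le_div_iff_mul_le (Or.inl (Nat.cast_ne_zero.2 (Nat.factorial_ne_zero n)))
      (Or.inl (ENNReal.natCast_ne_top _))]
    rw [mul_comm]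
    exact le_trans hstep4 hstep5
  calc volume {y : Fin n → ℝ | (∀ i, 0 ≤ y i) ∧ (∑ i, y i) ≤ A + B ∧
        A ≤ ∑ i ∈ Finset.univ.filter (fun i : Fin n => (i : ℕ) < k), y i}
      ≤ volume (⇑(psum n) ⁻¹' O) := measure_mono hsub1
    _ = volume O := hpre
    _ ≤ volume O' := hOO'
    _ ≤ _ := hO'le

/-- Volume bound for
`W₂ = {x ∈ (0,1]^n : r₀/R ≤ ∏_{i=1}^n x_i ≤ r₀/c, ∏_{i=1}^k x_i ≤ r₀D/c}`:
`Vol(W₂) ≤ (1/n!)(r₀/c) ∑_{j=1}^k C(n,k−j)(log(RD/c))^{n−k+j}(log(c/(Dr₀)))^{k−j}`. -/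
theorem stmt_8 (n k : ℕ) (hk : 1 ≤ k) (hkn : k ≤ n) (c D R r₀ : ℝ)
    (hD : 1 < D) (hr₀ : 0 < r₀) (hr₀c : r₀ < c / D) (hcR : c ≤ R) :
    volume {x : Fin n → ℝ | (∀ i, 0 < x i ∧ x i ≤ 1) ∧
        (r₀ / R ≤ ∏ i, x i ∧ ∏ i, x i ≤ r₀ / c) ∧
        ∏ i ∈ Finset.univ.filter (fun i : Fin n => (i : ℕ) < k), x i ≤ r₀ * D / c}
      ≤ ENNReal.ofReal ((1 / n !) * (r₀ / c) * ∑ j ∈ Finset.Icc 1 k,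
          (n.choose (k - j) : ℝ) * (Real.log (R * D / c)) ^ (n - k + j)
            * (Real.log (c / (D * r₀))) ^ (k - j)) := by
  classical
  have hD0 : (0:ℝ) < D := lt_trans one_pos hD
  have hcD : 0 < c / D := hr₀.trans hr₀c
  have hc : (0:ℝ) < c := by
    have := (div_pos_iff.1 hcD)
    rcases this with ⟨h1, _⟩ | ⟨_, h2⟩
    · exact h1
    · linarith
  have hR : (0:ℝ) < R := lt_of_lt_of_le hc hcR
  have hDr : r₀ * D < c := by
    rw [lt_div_iff₀ hD0] at hr₀c
    linarith
  set A := Real.log (c / (D * r₀)) with hAdef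
  set B := Real.log (R * D / c) with hBdef
  set lc := Real.log (c / r₀) with hlcdef
  set lR := Real.log (R / r₀) with hlRdef
  have hA : 0 ≤ A := Real.log_nonneg (by rw [le_div_iff₀ (by positivity)]; nlinarith)
  have hB : 0 ≤ B := Real.log_nonneg (by rw [le_div_iff₀ hc]; nlinarith)
  have hAB : lR = A + B := by
    rw [hlRdef, hAdef, hBdef, ← Real.log_mul (by positivity) (by positivity)]
    congr 1
    field_simp
  -- the y-space set
  set Y' : Set (Fin n → ℝ) := {y | (∀ i, 0 ≤ y i) ∧ lc ≤ ∑ i, y i ∧ (∑ i, y i) ≤ lR ∧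
      A ≤ ∑ i ∈ Finset.univ.filter (fun i : Fin n => (i : ℕ) < k), y i} with hY'
  set f : (Fin n → ℝ) → (Fin n → ℝ) := fun y i => Real.exp (-(y i)) with hf
  set f' : (Fin n → ℝ) → ((Fin n → ℝ) →L[ℝ] (Fin n → ℝ)) :=
    fun y => ContinuousLinearMap.pi (fun i : Fin n => (-Real.exp (-(y i))) •
      (ContinuousLinearMap.proj i : (Fin n → ℝ) →L[ℝ] ℝ)) with hf'
  -- exp/log helpers
  have hprod_exp : ∀ (s : Finset (Fin n)) (y : Fin n → ℝ),
      ∏ i ∈ s, Real.exp (-(y i)) = Real.exp (-(∑ i ∈ s, y i)) := by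
    intro s y
    rw [← Real.exp_sum]
    congr 1
    simp
  have e1 : Real.exp (-lc) = r₀ / c := by
    rw [hlcdef, ← Real.log_inv, Real.exp_log (by positivity)]
    rw [inv_div]
  have e2 : Real.exp (-lR) = r₀ / R := by
    rw [hlRdef, ← Real.log_inv, Real.exp_log (by positivity)]
    rw [inv_div]
  have e3 : Real.exp (-A) = r₀ * D / c := by
    rw [hAdef, ← Real.log_inv, Real.exp_log (by positivity)]
    rw [inv_div]
    ring
  -- measurability of Y'
  have hcontsum : Continuous fun y : Fin n → ℝ => ∑ i, y i :=
    continuous_finset_sum _ (fun i _ => continuous_apply i)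
  have hcontsum2 : Continuous fun y : Fin n → ℝ =>
      ∑ i ∈ Finset.univ.filter (fun i : Fin n => (i : ℕ) < k), y i :=
    continuous_finset_sum _ (fun i _ => continuous_apply i)
  have hmeasY' : MeasurableSet Y' := by
    refine MeasurableSet.inter ?_ (MeasurableSet.inter ?_ (MeasurableSet.inter ?_ ?_))
    · show MeasurableSet {y : Fin n → ℝ | ∀ i, 0 ≤ y i}
      rw [Set.setOf_forall]
      exact MeasurableSet.iInter fun i =>
        measurableSet_le measurable_const (measurable_pi_apply i)
    · exact measurableSet_le measurable_const hcontsum.measurable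
    · exact measurableSet_le hcontsum.measurable measurable_const
    · exact measurableSet_le measurable_const hcontsum2.measurable
  -- derivative
  have hderiv : ∀ y ∈ Y', HasFDerivWithinAt f (f' y) Y' y := by
    intro y _
    refine HasFDerivAt.hasFDerivWithinAt ?_
    refine hasFDerivAt_pi.2 fun i => ?_
    have h1 : HasFDerivAt (fun y : Fin n → ℝ => -(y i))
        (-(ContinuousLinearMap.proj i : (Fin n → ℝ) →L[ℝ] ℝ)) y :=
      (hasFDerivAt_apply i y).neg
    have h2 := h1.exp
    refine h2.congr_fderiv ?_
    ext v
    simp [hf']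
  -- determinant
  have hdet : ∀ y : Fin n → ℝ, (f' y).det = ∏ i, (-Real.exp (-(y i))) := by
    intro y
    have hcoe : ((f' y : (Fin n → ℝ) →L[ℝ] (Fin n → ℝ)) : (Fin n → ℝ) →ₗ[ℝ] (Fin n → ℝ))
        = LinearMap.pi (fun i => (-Real.exp (-(y i))) • LinearMap.proj i) := by
      apply LinearMap.ext
      intro v
      funext i
      simp [hf']
    show LinearMap.det ((f' y : (Fin n → ℝ) →L[ℝ] (Fin n → ℝ)) :
      (Fin n → ℝ) →ₗ[ℝ] (Fin n → ℝ)) = _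
    rw [hcoe, aux_det_pi]
  have habs : ∀ y ∈ Y', ENNReal.ofReal |(f' y).det| ≤ ENNReal.ofReal (r₀ / c) := by
    intro y hy
    refine ENNReal.ofReal_le_ofReal ?_
    rw [hdet]
    rw [Finset.abs_prod]
    have : ∀ i ∈ Finset.univ, |(-Real.exp (-(y i)))| = Real.exp (-(y i)) := by
      intro i _
      rw [abs_neg, abs_of_pos (Real.exp_pos _)]
    rw [Finset.prod_congr rfl this, hprod_exp]
    rw [← e1]
    exact Real.exp_le_exp.2 (neg_le_neg hy.2.1)
  -- injectivity
  have hinj : Set.InjOn f Y' := by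
    intro y _ y' _ h
    funext i
    have := congrFun h i
    simp only [hf] at this
    have := Real.exp_injective this
    linarith [this]
  -- image identification
  have himg : f '' Y' = {x : Fin n → ℝ | (∀ i, 0 < x i ∧ x i ≤ 1) ∧
      (r₀ / R ≤ ∏ i, x i ∧ ∏ i, x i ≤ r₀ / c) ∧
      ∏ i ∈ Finset.univ.filter (fun i : Fin n => (i : ℕ) < k), x i ≤ r₀ * D / c} := by
    ext x
    constructor
    · rintro ⟨y, ⟨h0, hl, hu, hp⟩, rfl⟩
      have hfull : ∏ i, f y i = Real.exp (-(∑ i, y i)) := hprod_exp Finset.univ y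
      have hpartial : ∏ i ∈ Finset.univ.filter (fun i : Fin n => (i : ℕ) < k), f y i
          = Real.exp (-(∑ i ∈ Finset.univ.filter (fun i : Fin n => (i : ℕ) < k), y i)) :=
        hprod_exp _ y
      refine ⟨fun i => ⟨Real.exp_pos _, Real.exp_le_one_iff.2 (neg_nonpos.2 (h0 i))⟩,
        ⟨?_, ?_⟩, ?_⟩
      · rw [hfull, ← e2]
        exact Real.exp_le_exp.2 (neg_le_neg hu)
      · rw [hfull, ← e1]
        exact Real.exp_le_exp.2 (neg_le_neg hl)
      · rw [hpartial, ← e3]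
        exact Real.exp_le_exp.2 (neg_le_neg hp)
    · rintro ⟨hb, ⟨hlow, hup⟩, hpart⟩
      have hxpos : ∀ i, (0:ℝ) < x i := fun i => (hb i).1
      have hppos : 0 < ∏ i, x i := Finset.prod_pos fun i _ => hxpos i
      have hfppos : 0 < ∏ i ∈ Finset.univ.filter (fun i : Fin n => (i : ℕ) < k), x i :=
        Finset.prod_pos fun i _ => hxpos i
      refine ⟨fun i => -Real.log (x i), ⟨?_, ?_, ?_, ?_⟩, ?_⟩
      · intro i
        simp only [neg_nonneg]
        exact Real.log_nonpos (hxpos i).le (hb i).2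
      · have hsum : ∑ i, -Real.log (x i) = -Real.log (∏ i, x i) := by
          rw [Real.log_prod (fun i _ => (hxpos i).ne')]
          simp
        rw [hsum]
        have h1 := Real.log_le_log hppos hup
        have h2 : Real.log (r₀ / c) = -lc := by
          rw [hlcdef, ← Real.log_inv, inv_div]
        linarith
      · have hsum : ∑ i, -Real.log (x i) = -Real.log (∏ i, x i) := by
          rw [Real.log_prod (fun i _ => (hxpos i).ne')]
          simp
        rw [hsum]
        have h1 := Real.log_le_log (by positivity) hlow
        have h2 : Real.log (r₀ / R) = -lR := by
          rw [hlRdef, ← Real.log_inv, inv_div]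
        linarith
      · have hsum : ∑ i ∈ Finset.univ.filter (fun i : Fin n => (i : ℕ) < k),
            -Real.log (x i) = -Real.log (∏ i ∈ Finset.univ.filter
              (fun i : Fin n => (i : ℕ) < k), x i) := by
          rw [Real.log_prod (fun i _ => (hxpos i).ne')]
          simp
        rw [hsum]
        have h1 := Real.log_le_log hfppos hpart
        have h2 : Real.log (r₀ * D / c) = -A := by
          rw [hAdef, ← Real.log_inv, inv_div]
          congr 1
          ring
        linarith
      · funext i
        simp only [hf]
        rw [neg_neg, Real.exp_log (hxpos i)]
  -- change of variables
  rw [← himg, ← MeasureTheory.lintegral_abs_det_fderiv_eq_addHaar_image volume hmeasY' hderiv hinj]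
  have hY'sub : Y' ⊆ {y : Fin n → ℝ | (∀ i, 0 ≤ y i) ∧ (∑ i, y i) ≤ A + B ∧
      A ≤ ∑ i ∈ Finset.univ.filter (fun i : Fin n => (i : ℕ) < k), y i} := by
    rintro y ⟨h0, _, hu, hp⟩
    exact ⟨h0, by rw [← hAB]; exact hu, hp⟩
  have hM : (∑ j ∈ Finset.Icc 1 k, (n.choose (k - j) : ℝ) * B ^ (n - k + j) * A ^ (k - j))
      = ∑ j ∈ Finset.range k, (n.choose j : ℝ) * A ^ j * B ^ (n - j) := by
    refine Finset.sum_nbij' (fun j => k - j) (fun j => k - j) ?_ ?_ ?_ ?_ ?_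
    · intro a ha
      simp only [Finset.mem_Icc] at ha
      simp only [Finset.mem_range]
      omega
    · intro a ha
      simp only [Finset.mem_range] at ha
      simp only [Finset.mem_Icc]
      omega
    · intro a ha
      simp only [Finset.mem_Icc] at ha
      show k - (k - a) = a
      omega
    · intro a ha
      simp only [Finset.mem_range] at ha
      show k - (k - a) = a
      omega
    · intro a ha
      simp only [Finset.mem_Icc] at ha
      show (n.choose (k - a) : ℝ) * B ^ (n - k + a) * A ^ (k - a)
          = (n.choose (k - a) : ℝ) * A ^ (k - a) * B ^ (n - (k - a))
      have h1 : n - (k - a) = n - k + a := by omega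
      rw [h1]
      ring
  calc ∫⁻ y in Y', ENNReal.ofReal |(f' y).det|
      ≤ ∫⁻ _ in Y', ENNReal.ofReal (r₀ / c) := setLIntegral_mono measurable_const habs
    _ = ENNReal.ofReal (r₀ / c) * volume Y' := by rw [setLIntegral_const]
    _ ≤ ENNReal.ofReal (r₀ / c) * (ENNReal.ofReal (∑ j ∈ Finset.range k,
          (n.choose j : ℝ) * A ^ j * B ^ (n - j)) / n !) := by
        refine mul_le_mul_right ?_ _
        exact le_trans (measure_mono hY'sub) (aux_simplex n k hk hkn A B hA hB)
    _ = ENNReal.ofReal ((1 / n !) * (r₀ / c) * ∑ j ∈ Finset.Icc 1 k,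
          (n.choose (k - j) : ℝ) * B ^ (n - k + j) * A ^ (k - j)) := by
        rw [hM]
        rw [ENNReal.ofReal_mul (by positivity), ENNReal.ofReal_mul (by positivity)]
        rw [one_div, ENNReal.ofReal_inv_of_pos (by positivity), ENNReal.ofReal_natCast]
        rw [ENNReal.div_eq_inv_mul]
        ring
end
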